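/- Let Γ̃ be a group with a central element ζ, let Γ = Γ̃/⟨ζ⟩, and let V be a right Γ̃-module. Suppose V is a maximally perturbable Γ̃-module with respect to generators α₁,…,α_t (α_t = ζ) as in the canonical presentation. If v ∈ V^{Γ̃,q+1} satisfies v|(ζ−1) = 0, then v lies in the Γ-higher-order invariants (V^{⟨ζ⟩})^{Γ,q+1} of the fixed-point module V^{⟨ζ⟩}, where Γ acts via the quotient. -/
import Mathlib


/-- Higher order invariants `V^{Γ̃,q}` for the group `Γ̃` acting on `V`:
level `0` is `{0}`, level `q+1` is `{v : ∀ γ, v|(γ−1) ∈ level q}`. -/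
def HigherInv {Γt V : Type*} [Group Γt] [AddCommGroup V] [Module ℂ V]
    (ρ : Γt →* (V →ₗ[ℂ] V)) : ℕ → Set V
  | 0 => {0}
  | q + 1 => {v | ∀ γ : Γt, ρ γ v - v ∈ HigherInv ρ q}

/-- The higher order invariants `(V^{⟨ζ⟩})^{Γ,q}` of the fixed-point module `V^{⟨ζ⟩}` under
`Γ = Γ̃/⟨ζ⟩`: since the action of a coset `γ⟨ζ⟩` on a `ζ`-fixed vector is independent of the
representative, `(V^{⟨ζ⟩})^{Γ,q+1}` is the set of `ζ`-fixed `v` with `v|(γ−1)` of order `q`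
in `V^{⟨ζ⟩}` for every representative `γ ∈ Γ̃`. -/
def HigherInvFixed {Γt V : Type*} [Group Γt] [AddCommGroup V] [Module ℂ V]
    (ρ : Γt →* (V →ₗ[ℂ] V)) (ζ : Γt) : ℕ → Set V
  | 0 => {0}
  | q + 1 => {v | ρ ζ v = v ∧ ∀ γ : Γt, ρ γ v - v ∈ HigherInvFixed ρ ζ q}

/-- Let `ζ` be a central element of `Γ̃` and `Γ = Γ̃/⟨ζ⟩`.  If `v ∈ V^{Γ̃,q+1}` satisfies
`v|(ζ−1) = 0`, then `v` lies in the `Γ`-higher-order invariants `(V^{⟨ζ⟩})^{Γ,q+1}` of the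
fixed-point module `V^{⟨ζ⟩}`, where `Γ` acts via the quotient. -/
theorem stmt15 {Γt V : Type*} [Group Γt] [AddCommGroup V] [Module ℂ V]
    (ρ : Γt →* (V →ₗ[ℂ] V)) (ζ : Γt) (hζ : ζ ∈ Subgroup.center Γt)
    (q : ℕ) (v : V) (hv : v ∈ HigherInv ρ (q + 1)) (hζv : ρ ζ v = v) :
    v ∈ HigherInvFixed ρ ζ (q + 1) := by
  have key : ∀ n (w : V), w ∈ HigherInv ρ n → ρ ζ w = w → w ∈ HigherInvFixed ρ ζ n := by
    intro n
    induction n with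
    | zero => intro w hw _; exact hw
    | succ m ih =>
      intro w hw hwζ
      refine ⟨hwζ, fun γ => ih _ (hw γ) ?_⟩
      have hcomm : ζ * γ = γ * ζ := (Subgroup.mem_center_iff.mp hζ γ).symm
      have : ρ ζ (ρ γ w) = ρ γ w := by
        have := congrArg (fun g => ρ g w) hcomm
        simpa [map_mul, hwζ] using this
      simp [map_sub, this, hwζ]
  exact key (q + 1) v hv hζv
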